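/- arXiv:2408.06946 — 4 statements merged into one kernel-verified Lean document; each statement's English description precedes it below -/
import Mathlib

section
/- Let φ ∈ C_c^∞(ℝⁿ) be a smooth compactly supported function with supp φ ⊂ B_R(0). Then the function x ↦ ‖φ‖_{C²(ℝⁿ)} · (1 + R²)^{3/2} · √(1 + |x|²) + φ(x) is convex on ℝⁿ. -/
set_option maxHeartbeats 1000000

open RealInnerProductSpace

private lemma rpow_three_half_eq (a : ℝ) (ha : 0 ≤ a) :
    a ^ ((3 : ℝ) / 2) = Real.sqrt a ^ 3 := by
  rw [Real.sqrt_eq_rpow, ← Real.rpow_natCast (a ^ ((1:ℝ)/2)) 3, ← Real.rpow_mul ha]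
  norm_num

private lemma line_convex {n : ℕ}
    (φ : EuclideanSpace ℝ (Fin n) → ℝ) (R C : ℝ)
    (hφ : ContDiff ℝ (⊤ : ℕ∞) φ)
    (hsupp : tsupport φ ⊆ Metric.closedBall (0 : EuclideanSpace ℝ (Fin n)) R)
    (hC : 0 ≤ C)
    (hC2 : ∀ x, ‖iteratedFDeriv ℝ 2 φ x‖ ≤ C)
    (x v : EuclideanSpace ℝ (Fin n)) :
    ConvexOn ℝ Set.univ
      (fun t : ℝ => C * (1 + R ^ 2) ^ ((3 : ℝ) / 2) * Real.sqrt (1 + ‖x + t • v‖ ^ 2)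
        + φ (x + t • v)) := by
  have hφd : Differentiable ℝ φ := hφ.differentiable (by simp)
  have hφ' : ContDiff ℝ (⊤ : ℕ∞) (fderiv ℝ φ) := hφ.fderiv_right (by simp)
  have hφ'd : Differentiable ℝ (fderiv ℝ φ) := hφ'.differentiable (by simp)
  set y : ℝ → EuclideanSpace ℝ (Fin n) := fun t => x + t • v with hy
  have hyd : ∀ t : ℝ, HasDerivAt y v t := by
    intro t
    have h := ((hasDerivAt_id t).smul_const v).const_add x
    simp only [one_smul] at h
    exact h
  have hspos : ∀ t : ℝ, (0:ℝ) < 1 + ‖y t‖ ^ 2 := fun t => by positivity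
  have hsqpos : ∀ t : ℝ, 0 < Real.sqrt (1 + ‖y t‖ ^ 2) := fun t => Real.sqrt_pos.mpr (hspos t)
  have hq : ∀ t : ℝ, HasDerivAt (fun t => 1 + ‖y t‖ ^ 2) (2 * ⟪y t, v⟫) t := by
    intro t
    have h2 : (fun t : ℝ => 1 + ‖y t‖ ^ 2) = fun t => 1 + ⟪y t, y t⟫ := by
      funext t; rw [real_inner_self_eq_norm_sq]
    rw [h2]
    have h1 := (HasDerivAt.inner ℝ (hyd t) (hyd t)).const_add 1
    refine h1.congr_deriv ?_
    rw [real_inner_comm (y t) v]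
    ring
  have hs : ∀ t : ℝ, HasDerivAt (fun t => Real.sqrt (1 + ‖y t‖ ^ 2))
      (⟪y t, v⟫ / Real.sqrt (1 + ‖y t‖ ^ 2)) t := by
    intro t
    have h := (Real.hasDerivAt_sqrt (hspos t).ne').comp t (hq t)
    refine h.congr_deriv ?_
    field_simp
  have hi : ∀ t : ℝ, HasDerivAt (fun t => ⟪y t, v⟫) (‖v‖ ^ 2) t := by
    intro t
    have h1 := HasDerivAt.inner ℝ (hyd t) (hasDerivAt_const t v)
    refine h1.congr_deriv ?_
    rw [inner_zero_right, zero_add, real_inner_self_eq_norm_sq]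
  have hp : ∀ t : ℝ, HasDerivAt (fun t => φ (y t)) (fderiv ℝ φ (y t) v) t := fun t =>
    (hφd (y t)).hasFDerivAt.comp_hasDerivAt t (hyd t)
  have hp' : ∀ t : ℝ, HasDerivAt (fun t => fderiv ℝ φ (y t) v)
      (fderiv ℝ (fderiv ℝ φ) (y t) v v) t := by
    intro t
    have h1 : HasDerivAt (fun t => fderiv ℝ φ (y t)) (fderiv ℝ (fderiv ℝ φ) (y t) v) t :=
      (hφ'd (y t)).hasFDerivAt.comp_hasDerivAt t (hyd t)
    have h2 := h1.clm_apply (hasDerivAt_const t v)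
    simpa using h2
  set M := C * (1 + R ^ 2) ^ ((3 : ℝ) / 2) with hMdef
  have hM : 0 ≤ M := by positivity
  have hg' : ∀ t : ℝ, HasDerivAt
      (fun t => M * Real.sqrt (1 + ‖y t‖ ^ 2) + φ (y t))
      (M * (⟪y t, v⟫ / Real.sqrt (1 + ‖y t‖ ^ 2)) + fderiv ℝ φ (y t) v) t :=
    fun t => ((hs t).const_mul M).add (hp t)
  have hg'' : ∀ t : ℝ, HasDerivAt
      (fun t => M * (⟪y t, v⟫ / Real.sqrt (1 + ‖y t‖ ^ 2)) + fderiv ℝ φ (y t) v)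
      (M * ((‖v‖ ^ 2 * (1 + ‖y t‖ ^ 2) - ⟪y t, v⟫ ^ 2) / Real.sqrt (1 + ‖y t‖ ^ 2) ^ 3)
        + fderiv ℝ (fderiv ℝ φ) (y t) v v) t := by
    intro t
    have hdiv := ((hi t).div (hs t) (hsqpos t).ne').const_mul M
    have hsum := hdiv.add (hp' t)
    refine hsum.congr_deriv ?_
    have hsne := (hsqpos t).ne'
    have h2 : Real.sqrt (1 + ‖y t‖ ^ 2) ^ 2 = 1 + ‖y t‖ ^ 2 := Real.sq_sqrt (hspos t).le
    set s := Real.sqrt (1 + ‖y t‖ ^ 2) with hsdef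
    congr 1
    rw [← h2]
    field_simp
  have hnonneg : ∀ t : ℝ,
      0 ≤ M * ((‖v‖ ^ 2 * (1 + ‖y t‖ ^ 2) - ⟪y t, v⟫ ^ 2) / Real.sqrt (1 + ‖y t‖ ^ 2) ^ 3)
        + fderiv ℝ (fderiv ℝ φ) (y t) v v := by
    intro t
    set z := y t with hz
    set s := Real.sqrt (1 + ‖z‖ ^ 2) with hsdef
    have hspos' : 0 < s := hsqpos t
    have hCS : ⟪z, v⟫ ^ 2 ≤ ‖z‖ ^ 2 * ‖v‖ ^ 2 := by
      have h1 := abs_real_inner_le_norm z v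
      nlinarith [sq_abs ⟪z, v⟫, abs_nonneg ⟪z, v⟫, norm_nonneg z, norm_nonneg v]
    have hnum : ‖v‖ ^ 2 ≤ ‖v‖ ^ 2 * (1 + ‖z‖ ^ 2) - ⟪z, v⟫ ^ 2 := by nlinarith
    by_cases hzR : ‖z‖ ≤ R
    · -- inside the ball: use the bound on the second derivative
      have hD : |fderiv ℝ (fderiv ℝ φ) z v v| ≤ C * ‖v‖ ^ 2 := by
        have h1 : iteratedFDeriv ℝ 2 φ z ![v, v] = fderiv ℝ (fderiv ℝ φ) z v v := by
          rw [iteratedFDeriv_two_apply]; simp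
        rw [← h1, ← Real.norm_eq_abs]
        calc ‖iteratedFDeriv ℝ 2 φ z ![v, v]‖
            ≤ ‖iteratedFDeriv ℝ 2 φ z‖ * ∏ i, ‖(![v, v]) i‖ :=
              (iteratedFDeriv ℝ 2 φ z).le_opNorm _
          _ = ‖iteratedFDeriv ℝ 2 φ z‖ * ‖v‖ ^ 2 := by
              rw [Fin.prod_univ_two]; simp [sq]
          _ ≤ C * ‖v‖ ^ 2 :=
              mul_le_mul_of_nonneg_right (hC2 z) (by positivity)
      have hsA : s ≤ Real.sqrt (1 + R ^ 2) := by
        apply Real.sqrt_le_sqrt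
        nlinarith [norm_nonneg z]
      have hMkey : C * ‖v‖ ^ 2
          ≤ M * ((‖v‖ ^ 2 * (1 + ‖z‖ ^ 2) - ⟪z, v⟫ ^ 2) / s ^ 3) := by
        rw [hMdef, rpow_three_half_eq _ (by positivity), ← mul_div_assoc,
          le_div_iff₀ (by positivity)]
        have e1 : C * ‖v‖ ^ 2 * s ^ 3 ≤ C * ‖v‖ ^ 2 * Real.sqrt (1 + R ^ 2) ^ 3 :=
          mul_le_mul_of_nonneg_left (pow_le_pow_left₀ hspos'.le hsA 3) (by positivity)
        have e2 : C * Real.sqrt (1 + R ^ 2) ^ 3 * ‖v‖ ^ 2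
            ≤ C * Real.sqrt (1 + R ^ 2) ^ 3 * (‖v‖ ^ 2 * (1 + ‖z‖ ^ 2) - ⟪z, v⟫ ^ 2) :=
          mul_le_mul_of_nonneg_left hnum (by positivity)
        nlinarith [e1, e2]
      have habs := abs_le.mp hD
      linarith [hMkey, habs.1]
    · -- outside the ball: second derivative of φ vanishes
      have hz0 : z ∉ tsupport φ := by
        intro h
        have h1 := hsupp h
        rw [Metric.mem_closedBall, dist_zero_right] at h1
        exact hzR h1
      have hopen : IsOpen (tsupport φ)ᶜ := (isClosed_tsupport φ).isOpen_compl
      have hder0 : fderiv ℝ (fderiv ℝ φ) z = 0 := by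
        have hev : (fderiv ℝ φ) =ᶠ[nhds z] 0 := by
          filter_upwards [hopen.mem_nhds hz0] with w hw
          have hev2 : φ =ᶠ[nhds w] 0 := by
            filter_upwards [hopen.mem_nhds hw] with u hu
            exact image_eq_zero_of_notMem_tsupport hu
          rw [hev2.fderiv_eq]
          exact fderiv_const_apply 0
        rw [hev.fderiv_eq]
        exact fderiv_const_apply 0
      rw [hder0]
      simp only [ContinuousLinearMap.zero_apply, add_zero]
      have h0 : (0:ℝ) ≤ ‖v‖ ^ 2 * (1 + ‖z‖ ^ 2) - ⟪z, v⟫ ^ 2 := by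
        nlinarith [sq_nonneg ‖v‖]
      exact mul_nonneg hM (div_nonneg h0 (by positivity))
  have hcont : ContinuousOn (fun t : ℝ => M * Real.sqrt (1 + ‖y t‖ ^ 2) + φ (y t))
      Set.univ := by
    apply Continuous.continuousOn
    have hyc : Continuous y := continuous_const.add (continuous_id.smul continuous_const)
    have h1 : Continuous fun t : ℝ => 1 + ‖y t‖ ^ 2 :=
      continuous_const.add ((hyc.norm).pow 2)
    exact (continuous_const.mul (Real.continuous_sqrt.comp h1)).add (hφ.continuous.comp hyc)
  exact convexOn_of_hasDerivWithinAt2_nonneg convex_univ hcont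
    (fun t _ => by
      rw [interior_univ]
      exact (hg' t).hasDerivWithinAt)
    (fun t _ => by
      rw [interior_univ]
      exact (hg'' t).hasDerivWithinAt)
    (fun t _ => hnonneg t)

/-- If `φ` is smooth, compactly supported in `B_R(0)`, and `C` bounds `φ`, its first
derivative and its second derivative (so that `C ≥ ‖φ‖_{C²}`), then
`x ↦ C (1 + R²)^{3/2} √(1 + |x|²) + φ(x)` is convex. -/
theorem convex_of_smooth_perturbation {n : ℕ}
    (φ : EuclideanSpace ℝ (Fin n) → ℝ) (R C : ℝ)
    (hφ : ContDiff ℝ (⊤ : ℕ∞) φ) (hφc : HasCompactSupport φ)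
    (hsupp : tsupport φ ⊆ Metric.closedBall (0 : EuclideanSpace ℝ (Fin n)) R)
    (hC0 : ∀ x, |φ x| ≤ C)
    (hC1 : ∀ x, ‖fderiv ℝ φ x‖ ≤ C)
    (hC2 : ∀ x, ‖iteratedFDeriv ℝ 2 φ x‖ ≤ C) :
    ConvexOn ℝ Set.univ
      (fun x => C * (1 + R ^ 2) ^ ((3 : ℝ) / 2) * Real.sqrt (1 + ‖x‖ ^ 2) + φ x) := by
  have hC : 0 ≤ C := (abs_nonneg _).trans (hC0 0)
  refine ⟨convex_univ, fun p _ q _ a b ha hb hab => ?_⟩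
  have key := line_convex φ R C hφ hsupp hC hC2 p (q - p)
  have h := key.2 (Set.mem_univ (0 : ℝ)) (Set.mem_univ (1 : ℝ)) ha hb hab
  simp only [smul_eq_mul, mul_zero, mul_one, zero_add, zero_smul, add_zero, one_smul] at h
  have e1 : p + b • (q - p) = a • p + b • q := by
    have hab' : a = 1 - b := by linarith
    rw [hab']; module
  have e2 : p + (q - p) = q := by module
  rw [e1, e2] at h
  simpa using h
end

section
/- Let K ⊂ ℝ^{n+1} be a nonempty compact convex set and φ : ℝⁿ → ℝ a bounded function such that g(x) = h_K(x, −1) + φ(x) is convex on ℝⁿ. Then the Fenchel conjugate g* is a convex function with compact domain equal to dom⌊K⌋, and there exists a nonempty compact convex set L ⊂ ℝ^{n+1} with g(x) = h_L(x, −1) for all x ∈ ℝⁿ. -/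
open scoped RealInnerProductSpace

/-- The Fenchel-Legendre transform of an extended-real-valued function. -/
noncomputable def conjE {n : ℕ} (f : EuclideanSpace ℝ (Fin n) → EReal)
    (y : EuclideanSpace ℝ (Fin n)) : EReal :=
  ⨆ x, ((⟪y, x⟫ : ℝ) : EReal) - f x

/-- `y` belongs to the subgradient of `f` at `x`. -/
def InSubgrad {n : ℕ} (f : EuclideanSpace ℝ (Fin n) → EReal)
    (x y : EuclideanSpace ℝ (Fin n)) : Prop :=
  ∀ z, f x + ((⟪z - x, y⟫ : ℝ) : EReal) ≤ f z

/-- `f` is proper: not identically `⊤` and never `⊥`. -/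
def ProperE {n : ℕ} (f : EuclideanSpace ℝ (Fin n) → EReal) : Prop :=
  (∃ x, f x ≠ ⊤) ∧ ∀ x, f x ≠ ⊥

/-- Convexity for extended-real-valued functions. -/
def ConvexE {n : ℕ} (f : EuclideanSpace ℝ (Fin n) → EReal) : Prop :=
  ∀ x y : EuclideanSpace ℝ (Fin n), ∀ a b : ℝ, 0 ≤ a → 0 ≤ b → a + b = 1 →
    f (a • x + b • y) ≤ ((a : ℝ) : EReal) * f x + ((b : ℝ) : EReal) * f y


/-- `⌊K⌋(x) = inf {t : (x, t) ∈ K}` (with value `⊤` when no such `t` exists), as an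
extended-real-valued function. -/
noncomputable def floorE {n : ℕ} (K : Set (EuclideanSpace ℝ (Fin n) × ℝ))
    (x : EuclideanSpace ℝ (Fin n)) : EReal :=
  ⨅ t ∈ {t : ℝ | (x, t) ∈ K}, ((t : ℝ) : EReal)


/-!
Because `φ` is bounded, `⟪y, ·⟫ - g` is bounded above exactly when `⟪y, ·⟫ - h_K(·, -1)` is, and
that happens exactly when `y` lies in the projection `dom ⌊K⌋` of `K`: otherwise a hyperplane
separating `y` from that projection makes the difference grow linearly along its normal. The
continuous convex function `g` is the supremum of its affine minorants `⟪y, ·⟫ - t`; for these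
`y ∈ dom g*`, and `t` may be capped by a bound on `g*` over that compact domain, so the minorants
form a compact convex set `L` with `g = h_L(·, -1)`.
-/

open Set

section ConvexDuality

variable {E : Type*} [NormedAddCommGroup E] [InnerProductSpace ℝ E]

/-- `lowerSupport K x = h_K(x, -1)`. -/
noncomputable def lowerSupport (K : Set (E × ℝ)) (x : E) : ℝ :=
  sSup ((fun p : E × ℝ => ⟪p.1, x⟫ - p.2) '' K)

lemma le_lowerSupport {K : Set (E × ℝ)} (hK : IsCompact K) {p : E × ℝ} (hp : p ∈ K) (x : E) :
    ⟪p.1, x⟫ - p.2 ≤ lowerSupport K x :=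
  le_csSup (hK.image (by fun_prop)).bddAbove (mem_image_of_mem _ hp)

lemma lowerSupport_le {K : Set (E × ℝ)} (hK : K.Nonempty) {x : E} {r : ℝ}
    (h : ∀ p ∈ K, ⟪p.1, x⟫ - p.2 ≤ r) : lowerSupport K x ≤ r :=
  csSup_le (hK.image _) (forall_mem_image.2 h)

lemma bddAbove_range_inner_sub_add_iff_of_abs_le {f φ : E → ℝ} {C : ℝ} (hφ : ∀ x, |φ x| ≤ C)
    (y : E) :
    BddAbove (range fun x => ⟪y, x⟫ - (f x + φ x)) ↔ BddAbove (range fun x => ⟪y, x⟫ - f x) := by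
  have hφ' := fun x => abs_le.1 (hφ x)
  constructor <;> rintro ⟨B, hB⟩ <;> refine ⟨B + C, forall_mem_range.2 fun x => ?_⟩ <;>
    have := hB (mem_range_self x) <;> linarith [hφ' x]

/-- Points outside the projection of `K` are separated from it by a hyperplane; moving along its
normal `v`, `⟪y, s • v⟫ - h_K(s • v, -1)` grows linearly in `s`. -/
lemma mem_image_fst_of_bddAbove [CompleteSpace E] {K : Set (E × ℝ)} (hKne : K.Nonempty)
    (hK : IsCompact K) (hKconv : Convex ℝ K) {y : E}
    (hy : BddAbove (range fun x => ⟪y, x⟫ - lowerSupport K x)) : y ∈ Prod.fst '' K := by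
  by_contra hyK
  obtain ⟨ℓ, u, hℓK, hℓy⟩ := geometric_hahn_banach_closed_point
    (hKconv.linear_image (LinearMap.fst ℝ E ℝ)) (hK.image continuous_fst).isClosed hyK
  set v := (InnerProductSpace.toDual ℝ E).symm ℓ
  have hv : ∀ w, ⟪v, w⟫ = ℓ w := fun w => InnerProductSpace.toDual_symm_apply
  obtain ⟨m, hm⟩ := (hK.image continuous_snd).bddBelow
  obtain ⟨B, hB⟩ := hy
  have hgrowth : ∀ s : ℝ, 0 ≤ s → s * (ℓ y - u) + m ≤ B := fun s hs => by
    have hsup : lowerSupport K (s • v) ≤ s * u - m := lowerSupport_le hKne fun p hp => by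
      have h1 : ℓ p.1 < u := hℓK _ (mem_image_of_mem _ hp)
      have h2 : m ≤ p.2 := hm (mem_image_of_mem _ hp)
      rw [real_inner_smul_right, real_inner_comm, hv]
      nlinarith
    have := hB (mem_range_self (s • v))
    rw [real_inner_smul_right, real_inner_comm, hv] at this
    linarith
  have hd : 0 < ℓ y - u := by linarith
  have := hgrowth ((|B - m| + 1) / (ℓ y - u)) (by positivity)
  rw [div_mul_cancel₀ _ hd.ne'] at this
  linarith [le_abs_self (B - m)]

lemma bddAbove_range_inner_sub_lowerSupport_iff [CompleteSpace E] {K : Set (E × ℝ)}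
    (hKne : K.Nonempty) (hK : IsCompact K) (hKconv : Convex ℝ K) (y : E) :
    BddAbove (range fun x => ⟪y, x⟫ - lowerSupport K x) ↔ y ∈ Prod.fst '' K := by
  refine ⟨mem_image_fst_of_bddAbove hKne hK hKconv, ?_⟩
  rintro ⟨p, hp, rfl⟩
  exact ⟨p.2, forall_mem_range.2 fun x => by linarith [le_lowerSupport hK hp x]⟩

/-- The pair `(y, t)` stands for the affine minorant `z ↦ ⟪y, z⟫ - t` of `g`; capping `t` by `M`
makes the set compact. -/
def affineMinorants (g : E → ℝ) (M : ℝ) : Set (E × ℝ) :=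
  {p | (∀ z, ⟪p.1, z⟫ - p.2 ≤ g z) ∧ p.2 ≤ M}

variable {g : E → ℝ} {M : ℝ}

lemma convex_affineMinorants : Convex ℝ (affineMinorants g M) := by
  rintro p ⟨hp, hpM⟩ q ⟨hq, hqM⟩ a b ha hb hab
  refine ⟨fun z => ?_, ?_⟩
  · calc ⟪(a • p + b • q).1, z⟫ - (a • p + b • q).2
          = a * (⟪p.1, z⟫ - p.2) + b * (⟪q.1, z⟫ - q.2) := by
          simp only [Prod.fst_add, Prod.snd_add, Prod.smul_fst, Prod.smul_snd, smul_eq_mul,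
            inner_add_left, real_inner_smul_left]
          ring
      _ ≤ a * g z + b * g z := by gcongr <;> [exact hp z; exact hq z]
      _ = g z := by rw [← add_mul, hab, one_mul]
  · calc a * p.2 + b * q.2 ≤ a * M + b * M := by gcongr
      _ = M := by rw [← add_mul, hab, one_mul]

lemma isClosed_affineMinorants : IsClosed (affineMinorants g M) := by
  have hL : affineMinorants g M = (⋂ z, {p : E × ℝ | ⟪p.1, z⟫ - p.2 ≤ g z}) ∩ {p | p.2 ≤ M} := by
    ext p
    simp [affineMinorants]
  rw [hL]
  exact (isClosed_iInter fun z => isClosed_le (by fun_prop) continuous_const).inter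
    (isClosed_le continuous_snd continuous_const)

lemma isCompact_affineMinorants {D : Set E} (hD : IsCompact D)
    (hdom : ∀ y, BddAbove (range fun z => ⟪y, z⟫ - g z) → y ∈ D) :
    IsCompact (affineMinorants g M) := by
  refine (hD.prod (isCompact_Icc (a := -g 0) (b := M))).of_isClosed_subset
    isClosed_affineMinorants ?_
  rintro p ⟨hp, hpM⟩
  refine ⟨hdom p.1 ⟨p.2, forall_mem_range.2 fun z => by linarith [hp z]⟩, ?_, hpM⟩
  have := hp 0
  rw [inner_zero_right] at this
  linarith

/-- Bourbaki's approximation theorem gives an affine minorant `⟪y, ·⟫ + c` with value `a` at `x`;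
since `-c` and (by `hM`) `M` both bound `⟪y, ·⟫ - g`, so does `min (-c) M`. -/
lemma exists_mem_affineMinorants_le [CompleteSpace E] (hg : ConvexOn ℝ univ g)
    (hlsc : LowerSemicontinuous g)
    (hM : ∀ y, BddAbove (range fun z => ⟪y, z⟫ - g z) → ∀ z, ⟪y, z⟫ - g z ≤ M)
    {x : E} {a : ℝ} (ha : a < g x) :
    ∃ p ∈ affineMinorants g M, a ≤ ⟪p.1, x⟫ - p.2 := by
  obtain ⟨ℓ, c, hℓg, hℓx⟩ := hg.exists_affine_le_of_lt (𝕜 := ℝ) (mem_univ x) ha isClosed_univ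
    (hlsc.lowerSemicontinuousOn univ)
  set y := (InnerProductSpace.toDual ℝ E).symm ℓ
  have hy : ∀ w, ⟪y, w⟫ = ℓ w := fun w => InnerProductSpace.toDual_symm_apply
  have hyc : ∀ z, ⟪y, z⟫ - g z ≤ -c := fun z => by
    have := hℓg ⟨z, mem_univ z⟩
    simp only [Pi.add_apply, domRestrict_apply, Function.comp_apply, RCLike.re_to_real,
      Function.const_apply] at this
    rw [hy]
    linarith
  have hyM := hM y ⟨-c, forall_mem_range.2 hyc⟩
  refine ⟨(y, min (-c) M), ⟨fun z => ?_, min_le_right _ _⟩, ?_⟩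
  · rcases min_choice (-c) M with h | h <;> rw [h] <;> linarith [hyc z, hyM z]
  · simp only [RCLike.re_to_real] at hℓx
    rw [hy]
    linarith [min_le_left (-c) M]

lemma nonempty_affineMinorants [CompleteSpace E] (hg : ConvexOn ℝ univ g)
    (hlsc : LowerSemicontinuous g)
    (hM : ∀ y, BddAbove (range fun z => ⟪y, z⟫ - g z) → ∀ z, ⟪y, z⟫ - g z ≤ M) :
    (affineMinorants g M).Nonempty :=
  let ⟨p, hp, _⟩ := exists_mem_affineMinorants_le hg hlsc hM (sub_one_lt (g 0))
  ⟨p, hp⟩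

lemma lowerSupport_affineMinorants [CompleteSpace E] (hg : ConvexOn ℝ univ g)
    (hlsc : LowerSemicontinuous g)
    (hM : ∀ y, BddAbove (range fun z => ⟪y, z⟫ - g z) → ∀ z, ⟪y, z⟫ - g z ≤ M) (x : E) :
    lowerSupport (affineMinorants g M) x = g x := by
  have hle : ∀ q ∈ affineMinorants g M, ⟪q.1, x⟫ - q.2 ≤ g x := fun q hq => hq.1 x
  refine le_antisymm (lowerSupport_le (nonempty_affineMinorants hg hlsc hM) hle)
    (le_of_forall_lt fun a ha => ?_)
  obtain ⟨b, hab, hb⟩ := exists_between ha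
  obtain ⟨q, hq, hbq⟩ := exists_mem_affineMinorants_le hg hlsc hM hb
  exact hab.trans_le (hbq.trans
    (le_csSup ⟨g x, forall_mem_image.2 hle⟩ (mem_image_of_mem _ hq)))

end ConvexDuality

section Conjugate

variable {n : ℕ}

lemma coe_inner_sub_le_conjE (f : EuclideanSpace ℝ (Fin n) → ℝ)
    (y x : EuclideanSpace ℝ (Fin n)) :
    ((⟪y, x⟫ - f x : ℝ) : EReal) ≤ conjE (fun x => (f x : EReal)) y := by
  rw [EReal.coe_sub]
  exact le_iSup (fun x => ((⟪y, x⟫ : ℝ) : EReal) - (f x : EReal)) x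

lemma conjE_le_coe {f : EuclideanSpace ℝ (Fin n) → ℝ} {y : EuclideanSpace ℝ (Fin n)} {r : ℝ}
    (h : ∀ x, ⟪y, x⟫ - f x ≤ r) : conjE (fun x => (f x : EReal)) y ≤ r :=
  iSup_le fun x => by rw [← EReal.coe_sub]; exact_mod_cast h x

lemma conjE_ne_top_iff (f : EuclideanSpace ℝ (Fin n) → ℝ) (y : EuclideanSpace ℝ (Fin n)) :
    conjE (fun x => (f x : EReal)) y ≠ ⊤ ↔ BddAbove (range fun x => ⟪y, x⟫ - f x) := by
  refine ⟨fun h => ⟨(conjE (fun x => (f x : EReal)) y).toReal, forall_mem_range.2 fun x => ?_⟩,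
    fun ⟨B, hB⟩ => ((conjE_le_coe (forall_mem_range.1 hB)).trans_lt (EReal.coe_lt_top B)).ne⟩
  have hx := coe_inner_sub_le_conjE f y x
  rw [← EReal.coe_toReal h (ne_bot_of_le_ne_bot (EReal.coe_ne_bot _) hx)] at hx
  exact_mod_cast hx

lemma convexE_conjE (f : EuclideanSpace ℝ (Fin n) → ℝ) :
    ConvexE (conjE (fun x => (f x : EReal))) := by
  intro x y a b ha hb hab
  refine iSup_le fun z => ?_
  calc ((⟪a • x + b • y, z⟫ : ℝ) : EReal) - (f z : EReal)
      = ((a : ℝ) : EReal) * ((⟪x, z⟫ - f z : ℝ) : EReal)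
        + ((b : ℝ) : EReal) * ((⟪y, z⟫ - f z : ℝ) : EReal) := by
        rw [← EReal.coe_sub, ← EReal.coe_mul, ← EReal.coe_mul, ← EReal.coe_add,
          inner_add_left, real_inner_smul_left, real_inner_smul_left]
        congr 1
        linear_combination f z * hab
    _ ≤ _ := by gcongr <;> exact coe_inner_sub_le_conjE f _ z

lemma floorE_ne_top_iff (K : Set (EuclideanSpace ℝ (Fin n) × ℝ)) (x : EuclideanSpace ℝ (Fin n)) :
    floorE K x ≠ ⊤ ↔ x ∈ Prod.fst '' K := by
  simp [floorE]

end Conjugate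

/-- Bounded perturbations of restrictions of support functions: if
`g = h_K(·,−1) + φ` is convex with `φ` bounded, then `g*` is convex with compact domain
`dom ⌊K⌋`, and `g` is again of the form `h_L(·,−1)`. -/
theorem bounded_perturbation_supportFunction {n : ℕ}
    (K : Set (EuclideanSpace ℝ (Fin n) × ℝ)) (hKne : K.Nonempty)
    (hKcomp : IsCompact K) (hKconv : Convex ℝ K)
    (φ : EuclideanSpace ℝ (Fin n) → ℝ) (hφ : ∃ C : ℝ, ∀ x, |φ x| ≤ C)
    (hg : ConvexOn ℝ Set.univ
      (fun x => sSup ((fun p : EuclideanSpace ℝ (Fin n) × ℝ =>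
        (⟪p.1, x⟫ : ℝ) - p.2) '' K) + φ x)) :
    let g : EuclideanSpace ℝ (Fin n) → ℝ := fun x =>
      sSup ((fun p : EuclideanSpace ℝ (Fin n) × ℝ => (⟪p.1, x⟫ : ℝ) - p.2) '' K) + φ x
    ConvexE (conjE (fun x => ((g x : ℝ) : EReal))) ∧
      {y | conjE (fun x => ((g x : ℝ) : EReal)) y ≠ ⊤} = {x | floorE K x ≠ ⊤} ∧
      IsCompact {y | conjE (fun x => ((g x : ℝ) : EReal)) y ≠ ⊤} ∧
      ∃ L : Set (EuclideanSpace ℝ (Fin n) × ℝ), L.Nonempty ∧ IsCompact L ∧ Convex ℝ L ∧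
        ∀ x, g x = sSup ((fun p : EuclideanSpace ℝ (Fin n) × ℝ =>
          (⟪p.1, x⟫ : ℝ) - p.2) '' L) := by
  intro g
  obtain ⟨C, hC⟩ := hφ
  have hgcont : Continuous g := continuousOn_univ.1 (hg.continuousOn isOpen_univ)
  have hdom : ∀ y, BddAbove (range fun x => ⟪y, x⟫ - g x) ↔ y ∈ Prod.fst '' K := fun y =>
    (bddAbove_range_inner_sub_add_iff_of_abs_le hC y).trans
      (bddAbove_range_inner_sub_lowerSupport_iff hKne hKcomp hKconv y)
  have hconj : {y | conjE (fun x => ((g x : ℝ) : EReal)) y ≠ ⊤} = Prod.fst '' K := by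
    ext y
    exact (conjE_ne_top_iff g y).trans (hdom y)
  obtain ⟨B, hB⟩ := (hKcomp.image continuous_snd).bddAbove
  have hM : ∀ y, BddAbove (range fun z => ⟪y, z⟫ - g z) → ∀ z, ⟪y, z⟫ - g z ≤ B + C := by
    rintro y hy z
    obtain ⟨p, hp, rfl⟩ := (hdom y).1 hy
    have : p.2 ≤ B := hB (mem_image_of_mem _ hp)
    show ⟪p.1, z⟫ - (lowerSupport K z + φ z) ≤ B + C
    linarith [le_lowerSupport hKcomp hp z, (abs_le.1 (hC z)).1]
  refine ⟨convexE_conjE g, hconj.trans (ext fun x => (floorE_ne_top_iff K x).symm),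
    hconj ▸ hKcomp.image continuous_fst, affineMinorants g (B + C),
    nonempty_affineMinorants hg hgcont.lowerSemicontinuous hM,
    isCompact_affineMinorants (hKcomp.image continuous_fst) fun y hy => (hdom y).1 hy,
    convex_affineMinorants,
    fun x => (lowerSupport_affineMinorants hg hgcont.lowerSemicontinuous hM x).symm⟩
end

section
/- Let f : ℝⁿ → ℝ ∪ {∞} be a proper lower semicontinuous convex function whose domain has nonempty interior, and let (f_j) be a sequence of proper lower semicontinuous convex functions. If (f_j) converges pointwise to f on a dense subset of ℝⁿ, then (f_j) converges uniformly to f on every compact subset of ℝⁿ that contains no boundary point of dom f. -/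
open scoped RealInnerProductSpace

open Filter

/-- A fixed homeomorphic embedding of `EReal` into `[-1, 1] ⊂ ℝ`, used to express uniform
convergence of extended-real-valued functions. -/
noncomputable def embE (a : EReal) : ℝ :=
  if a = ⊤ then 1 else if a = ⊥ then -1 else Real.tanh a.toReal

/-!
Near a point of `int (dom f)`, finitely many points of `D` span a simplex containing a ball, so
convexity bounds the `fs j` (for large `j`) and `f` from above on that ball, and reflection through
a nearby point of `D` bounds them from below. Uniformly bounded convex functions are uniformly
Lipschitz on a smaller ball, and equi-Lipschitz functions that converge on a dense set converge
uniformly on compact sets.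

Near a point `x` outside `cl (dom f)`, a single point `d ∈ D` with `f d = ∞` is a convex
combination `a • w + b • y`, with fixed weights, of every `y` close to `x` and some `w` in a ball
inside `dom f` on which the `fs j` are eventually bounded above by `K`. Since `fs j d → ∞`, this
forces `fs j y ≥ (fs j d - a K) / b → ∞` uniformly in `y`.

Locally uniform convergence on the open set `ℝⁿ ∖ ∂(dom f)` then gives uniform convergence on its
compact subsets.
-/

open Topology Metric Set
open scoped NNReal

namespace Real

lemma hasDerivAt_tanh (x : ℝ) : HasDerivAt tanh (1 / cosh x ^ 2) x := by
  have h := (hasDerivAt_sinh x).div (hasDerivAt_cosh x) (cosh_pos x).ne'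
  rw [show sinh / cosh = tanh from funext fun y => (tanh_eq_sinh_div_cosh y).symm] at h
  refine h.congr_deriv ?_
  rw [← cosh_sq_sub_sinh_sq x]; ring

lemma lipschitzWith_tanh : LipschitzWith 1 tanh := by
  refine lipschitzWith_of_nnnorm_deriv_le (fun x => (hasDerivAt_tanh x).differentiableAt)
    fun x => ?_
  rw [← NNReal.coe_le_coe, coe_nnnorm, (hasDerivAt_tanh x).deriv, NNReal.coe_one,
    norm_of_nonneg (by positivity), div_le_one (by positivity)]
  nlinarith [one_le_cosh x]

lemma tendsto_tanh_atTop : Tendsto tanh atTop (𝓝 1) := by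
  have h : ∀ x, (1 - exp (-x) ^ 2) / (1 + exp (-x) ^ 2) = tanh x := fun x => by
    have e : exp x * exp (-x) = 1 := by rw [← exp_add, add_neg_cancel, exp_zero]
    rw [tanh_eq, div_eq_div_iff (by positivity) (by positivity)]
    linear_combination (-2 * exp (-x)) * e
  have hcont : Continuous fun u : ℝ => (1 - u ^ 2) / (1 + u ^ 2) :=
    .div (by fun_prop) (by fun_prop) fun u => by positivity
  have h0 := (hcont.tendsto 0).comp tendsto_exp_neg_atTop_nhds_zero
  norm_num at h0
  exact h0.congr h

end Real

lemma embE_coe (t : ℝ) : embE t = Real.tanh t := by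
  simp [embE]

lemma embE_top : embE ⊤ = 1 := by
  simp [embE]

lemma TendstoUniformlyOn.embE_of_toReal {α ι : Type*} {l : Filter ι} {F : ι → α → EReal}
    {g : α → EReal} {s : Set α} (hF : ∀ᶠ j in l, ∀ y ∈ s, F j y ≠ ⊤ ∧ F j y ≠ ⊥)
    (hg : ∀ y ∈ s, g y ≠ ⊤ ∧ g y ≠ ⊥)
    (h : TendstoUniformlyOn (fun j y => (F j y).toReal) (fun y => (g y).toReal) l s) :
    TendstoUniformlyOn (fun j y => embE (F j y)) (fun y => embE (g y)) l s := by
  have hcoe {a : EReal} (ha : a ≠ ⊤ ∧ a ≠ ⊥) : embE a = Real.tanh a.toReal := by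
    rw [← embE_coe, EReal.coe_toReal ha.1 ha.2]
  refine ((Real.lipschitzWith_tanh.uniformContinuous.comp_tendstoUniformlyOn h).congr ?_
    ).congr_right fun y hy => (hcoe (hg y hy)).symm
  filter_upwards [hF] with j hj y hy
  exact (hcoe (hj y hy)).symm

lemma tendstoUniformlyOn_embE_one {α ι : Type*} {l : Filter ι} {F : ι → α → EReal}
    {s : Set α} (h : ∀ A : ℝ, ∀ᶠ j in l, ∀ y ∈ s, (A : EReal) < F j y) :
    TendstoUniformlyOn (fun j y => embE (F j y)) (fun _ => 1) l s := by
  rw [Metric.tendstoUniformlyOn_iff]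
  intro ε hε
  obtain ⟨A, hA⟩ := eventually_atTop.1 (Metric.tendsto_nhds.1 Real.tendsto_tanh_atTop ε hε)
  filter_upwards [h A] with j hj y hy
  induction hFy : F j y with
  | bot => exact absurd (hFy ▸ hj y hy) not_lt_bot
  | coe t =>
    rw [embE_coe, dist_comm]
    exact hA t (EReal.coe_lt_coe_iff.1 (hFy ▸ hj y hy)).le
  | top => simpa [embE_top] using hε

lemma EReal.ne_top_and_ne_bot_of_mem_Icc {a : EReal} {B : ℝ} (h : a ∈ Icc (-(B : EReal)) B) :
    a ≠ ⊤ ∧ a ≠ ⊥ :=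
  ⟨ne_top_of_le_ne_top (EReal.coe_ne_top B) h.2, ne_bot_of_le_ne_bot (by simp) h.1⟩

lemma EReal.abs_toReal_le_of_mem_Icc {a : EReal} {B : ℝ} (h : a ∈ Icc (-(B : EReal)) B) :
    |a.toReal| ≤ B := by
  induction a with
  | bot => simp at h
  | top => simp at h
  | coe t =>
    simp only [mem_Icc, ← EReal.coe_neg, EReal.coe_le_coe_iff] at h
    exact abs_le.2 h

section NormedSpace

variable {E : Type*} [NormedAddCommGroup E] [NormedSpace ℝ E]

lemma ContinuousLinearMap.exists_lt_apply_of_lt_opNorm_real (φ : StrongDual ℝ E) {r : ℝ}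
    (hr : r < ‖φ‖) : ∃ g : E, ‖g‖ < 1 ∧ r < φ g := by
  obtain ⟨g, hg, hφg⟩ := φ.exists_lt_apply_of_lt_opNorm hr
  rcases lt_abs.1 hφg with h | h
  · exact ⟨g, hg, h⟩
  · exact ⟨-g, by rwa [norm_neg], by rwa [map_neg]⟩

lemma ball_subset_convexHull_of_dist_lt {ι : Type*} [Finite ι] {v d : ι → E} {x : E} {ε : ℝ}
    (hv : ball x (2 * ε) ⊆ convexHull ℝ (range v)) (hd : ∀ i, dist (d i) (v i) < ε) :
    ball x ε ⊆ convexHull ℝ (range d) := by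
  intro y hy
  by_contra hyd
  have hε : 0 < ε := pos_of_mem_ball hy
  have : Nonempty ι := range_nonempty_iff_nonempty.1 <|
    convexHull_nonempty_iff.1 ⟨x, hv (mem_ball_self (by positivity))⟩
  obtain ⟨φ, u, hφd, hφy⟩ := geometric_hahn_banach_closed_point (convex_convexHull ℝ _)
    ((finite_range d).isCompact_convexHull ℝ).isClosed hyd
  obtain ⟨i₀, hi₀⟩ := Finite.exists_max fun i => φ (v i)
  have hS : φ (v i₀) < u + ‖φ‖ * ε := by
    have h1 := hφd _ (subset_convexHull ℝ _ (mem_range_self i₀))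
    have h2 : φ (v i₀ - d i₀) ≤ ‖φ‖ * ε :=
      (le_abs_self _).trans <| (φ.le_opNorm _).trans <| mul_le_mul_of_nonneg_left
        (by rw [← dist_eq_norm, dist_comm]; exact (hd i₀).le) (norm_nonneg _)
    rw [map_sub] at h2
    linarith
  have hvS : convexHull ℝ (range v) ⊆ {z | φ z ≤ φ (v i₀)} :=
    convexHull_min (range_subset_iff.2 hi₀) (convex_halfSpace_le φ.toLinearMap.isLinear _)
  -- moving `y` by `ε g`, where `φ` nearly attains its norm at `g`, stays in `ball x (2 * ε)`
  -- but leaves the half-space `{φ ≤ max φ (v i)}`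
  obtain ⟨g, hg, hφg⟩ := φ.exists_lt_apply_of_lt_opNorm_real
    (r := ‖φ‖ - (u + ‖φ‖ * ε - φ (v i₀)) / ε) (by have := div_pos (sub_pos.2 hS) hε; linarith)
  have hy' : y + ε • g ∈ ball x (2 * ε) := by
    rw [mem_ball_iff_norm, add_sub_right_comm, two_mul]
    refine (norm_add_le _ _).trans_lt (add_lt_add (mem_ball_iff_norm.1 hy) ?_)
    rw [norm_smul, Real.norm_of_nonneg hε.le]
    nlinarith
  have hy'S := hvS (hv hy')
  simp only [mem_ofPred_eq, map_add, map_smul, smul_eq_mul] at hy'S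
  have hφg' : (‖φ‖ - φ g) * ε < u + ‖φ‖ * ε - φ (v i₀) := by rw [← lt_div_iff₀ hε]; linarith
  linarith

lemma Dense.exists_finite_subset_ball_subset_convexHull [FiniteDimensional ℝ E] {D U : Set E}
    (hD : Dense D) (hU : IsOpen U) {x : E} (hx : x ∈ U) :
    ∃ T ⊆ D ∩ U, T.Finite ∧ ∃ r > 0, ball x r ⊆ convexHull ℝ T := by
  obtain ⟨b, hxb, hbU⟩ := exists_mem_interior_convexHull_affineBasis (hU.mem_nhds hx)
  obtain ⟨ε, hε, hεb⟩ := Metric.isOpen_iff.1 isOpen_interior x hxb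
  have hd : ∀ i, (U ∩ ball (b i) (ε / 2) ∩ D).Nonempty := fun i =>
    hD.inter_open_nonempty _ (hU.inter isOpen_ball)
      ⟨b i, hbU (subset_convexHull ℝ _ (mem_range_self i)), mem_ball_self (by positivity)⟩
  choose d hd using hd
  refine ⟨range d, range_subset_iff.2 fun i => ⟨(hd i).2, (hd i).1.1⟩, finite_range d, ε / 2,
    by positivity, ball_subset_convexHull_of_dist_lt ?_ fun i => (hd i).1.2⟩
  rw [mul_div_cancel₀ _ two_ne_zero]
  exact hεb.trans interior_subset

lemma Dense.exists_forall_mem_ball_exists_combo_eq {D V : Set E} (hD : Dense D) (hV : IsOpen V)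
    {x : E} (hx : x ∈ V) (z : E) {r : ℝ} (hr : 0 < r) :
    ∃ a b : ℝ, 0 < a ∧ 0 < b ∧ a + b = 1 ∧ ∃ d ∈ D ∩ V, ∃ ρ > 0,
      ∀ y ∈ ball x ρ, ∃ w ∈ ball z r, a • w + b • y = d := by
  have hseg : Tendsto (fun t : ℝ => (1 - t) • z + t • x) (𝓝[<] 1) (𝓝 x) := by
    have : Continuous fun t : ℝ => (1 - t) • z + t • x := by fun_prop
    simpa using (this.tendsto 1).mono_left nhdsWithin_le_nhds
  obtain ⟨b, ⟨hb0, hb1⟩, hpV⟩ := (Filter.Eventually.and (Ioo_mem_nhdsLT zero_lt_one)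
    (hseg.eventually (hV.mem_nhds hx))).exists
  set a := 1 - b
  have ha : 0 < a := sub_pos.2 hb1
  obtain ⟨σ, hσ, hσV⟩ := Metric.isOpen_iff.1 hV _ hpV
  obtain ⟨d, ⟨hdσ, hdr⟩, hdD⟩ := hD.inter_open_nonempty (ball _ σ ∩ ball _ (a * r / 2))
    (isOpen_ball.inter isOpen_ball) ⟨_, mem_ball_self hσ, mem_ball_self (by positivity)⟩
  refine ⟨a, b, ha, hb0, sub_add_cancel 1 b, d, ⟨hdD, hσV hdσ⟩, a * r / (2 * b), by positivity,
    fun y hy => ⟨a⁻¹ • (d - b • y), ?_, by rw [smul_inv_smul₀ ha.ne', sub_add_cancel]⟩⟩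
  have hwz : a⁻¹ • (d - b • y) - z = a⁻¹ • ((d - (a • z + b • x)) - b • (y - x)) := by
    rw [show d - (a • z + b • x) - b • (y - x) = (d - b • y) - a • z by module,
      smul_sub _ (d - b • y), inv_smul_smul₀ ha.ne']
  rw [mem_ball_iff_norm, hwz, norm_smul, norm_inv, Real.norm_of_nonneg ha.le, inv_mul_lt_iff₀ ha]
  calc ‖(d - (a • z + b • x)) - b • (y - x)‖ ≤ ‖d - (a • z + b • x)‖ + ‖b • (y - x)‖ :=
        norm_sub_le _ _
    _ = ‖d - (a • z + b • x)‖ + b * ‖y - x‖ := by rw [norm_smul, Real.norm_of_nonneg hb0.le]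
    _ < a * r / 2 + b * (a * r / (2 * b)) := by
        gcongr
        · exact mem_ball_iff_norm.1 hdr
        · exact mem_ball_iff_norm.1 hy
    _ = a * r := by field_simp; ring

end NormedSpace

lemma tendstoUniformlyOn_of_lipschitzOnWith_of_dense {α ι : Type*} [PseudoMetricSpace α]
    {l : Filter ι} {F : ι → α → ℝ} {g : α → ℝ} {D s K : Set α} {L : ℝ≥0}
    (hD : Dense D) (hs : IsOpen s) (hK : IsCompact K) (hKs : K ⊆ s)
    (hF : ∀ᶠ j in l, LipschitzOnWith L (F j) s) (hg : LipschitzOnWith L g s)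
    (hconv : ∀ x ∈ D ∩ s, Tendsto (F · x) l (𝓝 (g x))) : TendstoUniformlyOn F g l K := by
  rw [Metric.tendstoUniformlyOn_iff]
  intro ε hε
  set δ := ε / (3 * (L + 1))
  have hδ : 0 < δ := by positivity
  obtain ⟨T, hTs, hTfin, hKT⟩ := hK.elim_finite_subcover_image (b := D ∩ s)
    (c := fun d => ball d δ) (fun _ _ => isOpen_ball) fun y hy => by
      obtain ⟨d, ⟨hdy, hds⟩, hdD⟩ :=
        hD.inter_open_nonempty _ (isOpen_ball.inter hs) ⟨y, mem_ball_self hδ, hKs hy⟩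
      exact mem_iUnion₂.2 ⟨d, ⟨hdD, hds⟩, mem_ball_comm.1 hdy⟩
  have hT : ∀ᶠ j in l, ∀ d ∈ T, dist (F j d) (g d) < ε / 3 :=
    hTfin.eventually_all.2 fun d hd => Metric.tendsto_nhds.1 (hconv d (hTs hd)) _ (by positivity)
  filter_upwards [hF, hT] with j hFj hTj y hy
  obtain ⟨d, hdT, hyd⟩ := mem_iUnion₂.1 (hKT hy)
  have hys := hKs hy
  have hds := (hTs hdT).2
  have hLδ : L * dist y d ≤ ε / 3 := calc
    (L : ℝ) * dist y d ≤ (L + 1) * δ :=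
      mul_le_mul (by linarith) (mem_ball.1 hyd).le dist_nonneg (by positivity)
    _ = ε / 3 := by simp only [δ]; field_simp
  calc dist (g y) (F j y) ≤ dist (g y) (g d) + dist (g d) (F j d) + dist (F j d) (F j y) :=
        dist_triangle4 _ _ _ _
    _ < ε / 3 + ε / 3 + ε / 3 := by
        have hgy := hg.dist_le_mul y hys d hds
        have hFy := hFj.dist_le_mul d hds y hys
        rw [dist_comm d] at hFy
        rw [dist_comm (g d)]
        linarith [hTj d hdT]
    _ = ε := by ring

namespace ConvexE

variable {n : ℕ} {g : EuclideanSpace ℝ (Fin n) → EReal}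

lemma le_combo (hg : ConvexE g) {u v : EuclideanSpace ℝ (Fin n)} {a b p q : ℝ} (ha : 0 ≤ a)
    (hb : 0 ≤ b) (hab : a + b = 1) (hu : g u ≤ p) (hv : g v ≤ q) :
    g (a • u + b • v) ≤ ((a * p + b * q : ℝ) : EReal) := by
  refine (hg u v a b ha hb hab).trans ?_
  push_cast
  gcongr

lemma lt_of_lt_combo (hg : ConvexE g) {w y : EuclideanSpace ℝ (Fin n)} {a b K A : ℝ} (ha : 0 ≤ a)
    (hb : 0 ≤ b) (hab : a + b = 1) (hw : g w ≤ K)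
    (h : ((a * K + b * A : ℝ) : EReal) < g (a • w + b • y)) : (A : EReal) < g y := by
  by_contra! hy
  exact (hg.le_combo ha hb hab hw hy).not_gt h

lemma le_on_convexHull (hg : ConvexE g) {T : Set (EuclideanSpace ℝ (Fin n))} {M : ℝ}
    (hT : ∀ d ∈ T, g d ≤ M) : ∀ y ∈ convexHull ℝ T, g y ≤ M := by
  refine convexHull_min (t := {y | g y ≤ M}) hT fun u hu v hv a b ha hb hab => ?_
  have h := hg.le_combo ha hb hab hu hv
  rwa [← add_mul, hab, one_mul] at h

lemma convexOn_toReal (hg : ConvexE g) {s : Set (EuclideanSpace ℝ (Fin n))} (hs : Convex ℝ s)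
    (hfin : ∀ y ∈ s, g y ≠ ⊤ ∧ g y ≠ ⊥) : ConvexOn ℝ s fun y => (g y).toReal := by
  refine ⟨hs, fun u hu v hv a b ha hb hab => ?_⟩
  have h := hg.le_combo ha hb hab (EReal.le_coe_toReal (hfin u hu).1)
    (EReal.le_coe_toReal (hfin v hv).1)
  have h' := EReal.toReal_le_toReal h (hfin _ (hs hu hv ha hb hab)).2 (EReal.coe_ne_top _)
  rwa [EReal.toReal_coe] at h'

lemma lipschitzOnWith_toReal (hg : ConvexE g) {x : EuclideanSpace ℝ (Fin n)} {r ε B : ℝ}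
    (hB : ∀ y ∈ ball x r, g y ∈ Icc (-(B : EReal)) B) (hε : 0 < ε) :
    LipschitzOnWith (2 * B / ε).toNNReal (fun y => (g y).toReal) (ball x (r - ε)) :=
  (hg.convexOn_toReal (convex_ball x r) fun y hy => EReal.ne_top_and_ne_bot_of_mem_Icc (hB y hy)
    ).lipschitzOnWith_of_abs_le hε fun y hy => EReal.abs_toReal_le_of_mem_Icc (hB y hy)

/-- Reflection through `d`: `g d ≤ (g y + g (2 • d - y)) / 2`. -/
lemma lt_on_ball_of_le_on_ball (hg : ConvexE g) {x d : EuclideanSpace ℝ (Fin n)} {R M a : ℝ}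
    (hM : ∀ y ∈ ball x R, g y ≤ M) (hd : dist d x < R / 4) (ha : (a : EReal) < g d) :
    ∀ y ∈ ball x (R / 2), ((2 * a - M : ℝ) : EReal) < g y := by
  intro y hy
  have hz : (2 : ℝ) • d - y ∈ ball x R := by
    rw [mem_ball_iff_norm, show (2 : ℝ) • d - y - x = (2 : ℝ) • (d - x) - (y - x) by module]
    refine (norm_sub_le _ _).trans_lt ?_
    rw [norm_smul, Real.norm_two, ← dist_eq_norm, ← dist_eq_norm]
    linarith [mem_ball.1 hy]
  refine hg.lt_of_lt_combo (a := 1 / 2) (b := 1 / 2) (by norm_num) (by norm_num) (by norm_num)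
    (hM _ hz) ?_
  rwa [show (1 / 2 : ℝ) • ((2 : ℝ) • d - y) + (1 / 2 : ℝ) • y = d by module,
    show (1 / 2 * M + 1 / 2 * (2 * a - M) : ℝ) = a by ring]

end ConvexE

section DenseConvergence

variable {n : ℕ} {f : EuclideanSpace ℝ (Fin n) → EReal}
  {fs : ℕ → EuclideanSpace ℝ (Fin n) → EReal} {D : Set (EuclideanSpace ℝ (Fin n))}

lemma exists_ball_eventually_le (hfconv : ConvexE f) (hfs : ∀ j, ConvexE (fs j)) (hD : Dense D)
    (hpt : ∀ x ∈ D, Tendsto (fun j => fs j x) atTop (𝓝 (f x)))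
    {x : EuclideanSpace ℝ (Fin n)} (hx : x ∈ interior {y | f y ≠ ⊤}) :
    ∃ r > 0, ∃ M : ℝ, (∀ y ∈ ball x r, f y ≤ M) ∧
      ∀ᶠ j in atTop, ∀ y ∈ ball x r, fs j y ≤ M := by
  obtain ⟨T, hTsub, hTfin, r, hr, hball⟩ :=
    hD.exists_finite_subset_ball_subset_convexHull isOpen_interior hx
  obtain ⟨M, hM⟩ := (hTfin.image fun d => (f d).toReal).bddAbove
  have hfM : ∀ d ∈ T, f d < (M + 1 : ℝ) := fun d hd =>
    (EReal.le_coe_toReal (interior_subset (hTsub hd).2)).trans_lt <|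
      EReal.coe_lt_coe_iff.2 (by linarith [hM (mem_image_of_mem _ hd)])
  refine ⟨r, hr, M + 1, fun y hy => hfconv.le_on_convexHull (fun d hd => (hfM d hd).le) y
    (hball hy), ?_⟩
  filter_upwards [hTfin.eventually_all.2 fun d hd => (hpt d (hTsub hd).1).eventually_lt_const
    (hfM d hd)] with j hj y hy
  exact (hfs j).le_on_convexHull (fun d hd => (hj d hd).le) y (hball hy)

lemma exists_ball_eventually_mem_Icc (hfb : ∀ y, f y ≠ ⊥) (hfconv : ConvexE f)
    (hfs : ∀ j, ConvexE (fs j)) (hD : Dense D)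
    (hpt : ∀ x ∈ D, Tendsto (fun j => fs j x) atTop (𝓝 (f x)))
    {x : EuclideanSpace ℝ (Fin n)} (hx : x ∈ interior {y | f y ≠ ⊤}) :
    ∃ r > 0, ∃ B : ℝ, (∀ y ∈ ball x r, f y ∈ Icc (-(B : EReal)) B) ∧
      ∀ᶠ j in atTop, ∀ y ∈ ball x r, fs j y ∈ Icc (-(B : EReal)) B := by
  obtain ⟨R, hR, M, hfM, hfsM⟩ := exists_ball_eventually_le hfconv hfs hD hpt hx
  obtain ⟨d, hdx, hdD⟩ :=
    hD.inter_open_nonempty (ball x (R / 4)) isOpen_ball ⟨x, mem_ball_self (by positivity)⟩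
  set a := (f d).toReal - 1
  have ha : (a : EReal) < f d :=
    (EReal.coe_lt_coe_iff.2 (sub_one_lt _)).trans_le (EReal.coe_toReal_le (hfb d))
  set B := max M (M - 2 * a)
  have hIcc {g : EuclideanSpace ℝ (Fin n) → EReal} (hg : ConvexE g)
      (hgM : ∀ y ∈ ball x R, g y ≤ M) (hgd : (a : EReal) < g d) :
      ∀ y ∈ ball x (R / 2), g y ∈ Icc (-(B : EReal)) B := fun y hy =>
    ⟨le_trans (by exact_mod_cast (by linarith [le_max_right M (M - 2 * a)] : -B ≤ 2 * a - M))
      (hg.lt_on_ball_of_le_on_ball hgM hdx hgd y hy).le,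
      (hgM y (ball_subset_ball (by linarith) hy)).trans (by exact_mod_cast le_max_left _ _)⟩
  refine ⟨R / 2, by positivity, B, hIcc hfconv hfM ha, ?_⟩
  filter_upwards [hfsM, (hpt d hdD).eventually_const_lt ha] with j hj hjd
  exact hIcc (hfs j) hj hjd

lemma tendstoLocallyUniformlyOn_interior_dom (hfb : ∀ y, f y ≠ ⊥) (hfconv : ConvexE f)
    (hfs : ∀ j, ConvexE (fs j)) (hD : Dense D)
    (hpt : ∀ x ∈ D, Tendsto (fun j => fs j x) atTop (𝓝 (f x))) :
    TendstoLocallyUniformlyOn (fun j y => embE (fs j y)) (fun y => embE (f y)) atTop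
      (interior {y | f y ≠ ⊤}) := by
  refine tendstoLocallyUniformlyOn_of_forall_exists_nhds fun x hx => ?_
  obtain ⟨r, hr, B, hfB, hfsB⟩ := exists_ball_eventually_mem_Icc hfb hfconv hfs hD hpt hx
  have hK : closedBall x (r / 4) ⊆ ball x (r - r / 2) := closedBall_subset_ball (by linarith)
  have hKr : closedBall x (r / 4) ⊆ ball x r := hK.trans (ball_subset_ball (by linarith))
  refine ⟨closedBall x (r / 4), mem_nhdsWithin_of_mem_nhds (closedBall_mem_nhds x (by positivity)),
    TendstoUniformlyOn.embE_of_toReal ?_ (fun y hy => EReal.ne_top_and_ne_bot_of_mem_Icc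
      (hfB y (hKr hy))) ?_⟩
  · filter_upwards [hfsB] with j hj y hy
    exact EReal.ne_top_and_ne_bot_of_mem_Icc (hj y (hKr hy))
  refine tendstoUniformlyOn_of_lipschitzOnWith_of_dense hD isOpen_ball (isCompact_closedBall x _)
    hK ?_ (hfconv.lipschitzOnWith_toReal hfB (half_pos hr)) fun y hy => ?_
  · filter_upwards [hfsB] with j hj using (hfs j).lipschitzOnWith_toReal hj (half_pos hr)
  · obtain ⟨hytop, hybot⟩ :=
      EReal.ne_top_and_ne_bot_of_mem_Icc (hfB y (ball_subset_ball (by linarith) hy.2))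
    exact (EReal.tendsto_toReal hytop hybot).comp (hpt y hy.1)

lemma tendstoLocallyUniformlyOn_interior_compl_dom (hfconv : ConvexE f)
    (hfs : ∀ j, ConvexE (fs j)) (hD : Dense D)
    (hpt : ∀ x ∈ D, Tendsto (fun j => fs j x) atTop (𝓝 (f x)))
    (hdom : (interior {y | f y ≠ ⊤}).Nonempty) :
    TendstoLocallyUniformlyOn (fun j y => embE (fs j y)) (fun y => embE (f y)) atTop
      (interior {y | f y ≠ ⊤}ᶜ) := by
  obtain ⟨z, hz⟩ := hdom
  obtain ⟨r, hr, K, -, hK⟩ := exists_ball_eventually_le hfconv hfs hD hpt hz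
  have hftop : ∀ y ∈ interior {y | f y ≠ ⊤}ᶜ, f y = ⊤ := fun y hy => not_not.1 (interior_subset hy)
  refine tendstoLocallyUniformlyOn_of_forall_exists_nhds fun x hx => ?_
  obtain ⟨a, b, ha, hb, hab, d, ⟨hdD, hdV⟩, ρ, hρ, hcombo⟩ :=
    hD.exists_forall_mem_ball_exists_combo_eq isOpen_interior hx z hr
  refine ⟨interior {y | f y ≠ ⊤}ᶜ ∩ ball x ρ, inter_mem_nhdsWithin _ (ball_mem_nhds x hρ),
    (tendstoUniformlyOn_embE_one fun A => ?_).congr_right fun y hy => by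
      rw [hftop y hy.1, embE_top]⟩
  have hd : Tendsto (fs · d) atTop (𝓝 ⊤) := hftop d hdV ▸ hpt d hdD
  filter_upwards [hK, hd.eventually_const_lt (EReal.coe_lt_top (a * K + b * A))] with j hj hjd y hy
  obtain ⟨w, hw, rfl⟩ := hcombo y hy.2
  exact (hfs j).lt_of_lt_combo ha.le hb.le hab (hj w hw) hjd

end DenseConvergence

theorem uniform_convergence_on_compacts_general {n : ℕ}
    (f : EuclideanSpace ℝ (Fin n) → EReal)
    (hfp : ProperE f) (hfconv : ConvexE f)
    (hdom : (interior {x | f x ≠ ⊤}).Nonempty)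
    (fs : ℕ → EuclideanSpace ℝ (Fin n) → EReal)
    (hfs : ∀ j, ProperE (fs j) ∧ LowerSemicontinuous (fs j) ∧ ConvexE (fs j))
    (D : Set (EuclideanSpace ℝ (Fin n))) (hD : Dense D)
    (hpt : ∀ x ∈ D, Tendsto (fun j => fs j x) atTop (nhds (f x))) :
    ∀ C : Set (EuclideanSpace ℝ (Fin n)), IsCompact C →
      C ∩ frontier {x | f x ≠ ⊤} = ∅ →
      TendstoUniformlyOn (fun j x => embE (fs j x)) (fun x => embE (f x)) atTop C := by
  intro C hC hCfr
  have hfsconv : ∀ j, ConvexE (fs j) := fun j => (hfs j).2.2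
  have hloc := (tendstoLocallyUniformlyOn_interior_dom hfp.2 hfconv hfsconv hD hpt).union
    isOpen_interior isOpen_interior
    (tendstoLocallyUniformlyOn_interior_compl_dom hfconv hfsconv hD hpt hdom)
  rw [← compl_frontier_eq_union_interior] at hloc
  exact (tendstoLocallyUniformlyOn_iff_forall_isCompact isClosed_frontier.isOpen_compl).1 hloc C
    (subset_compl_iff_disjoint_right.2 (disjoint_iff_inter_eq_empty.2 hCfr)) hC

/-- If a sequence of proper lsc convex functions converges pointwise on a dense subset to a
proper lsc convex function `f` whose domain has nonempty interior, then it converges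
uniformly to `f` on every compact set containing no boundary point of `dom f`. -/
theorem uniform_convergence_on_compacts {n : ℕ}
    (f : EuclideanSpace ℝ (Fin n) → EReal)
    (hfp : ProperE f) (hflsc : LowerSemicontinuous f) (hfconv : ConvexE f)
    (hdom : (interior {x | f x ≠ ⊤}).Nonempty)
    (fs : ℕ → EuclideanSpace ℝ (Fin n) → EReal)
    (hfs : ∀ j, ProperE (fs j) ∧ LowerSemicontinuous (fs j) ∧ ConvexE (fs j))
    (D : Set (EuclideanSpace ℝ (Fin n))) (hD : Dense D)
    (hpt : ∀ x ∈ D, Tendsto (fun j => fs j x) atTop (nhds (f x))) :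
    ∀ C : Set (EuclideanSpace ℝ (Fin n)), IsCompact C →
      C ∩ frontier {x | f x ≠ ⊤} = ∅ →
      TendstoUniformlyOn (fun j x => embE (fs j x)) (fun x => embE (f x)) atTop C :=
  uniform_convergence_on_compacts_general f hfp hfconv hdom fs hfs D hD hpt
end

section
/- Let V be a Hausdorff topological real vector space and μ : K^n → V a continuous valuation on convex bodies in ℝⁿ such that for each K the map t ↦ μ(tK), t ≥ 0, is a polynomial of degree at most n + d with values in V. Then there exist unique functionals μ_k : K^n → V, k = 0, …, n + d, each a continuous valuation homogeneous of degree k (i.e., μ_k(tK) = t^k μ_k(K) for t > 0), such that μ = Σ_{k=0}^{n+d} μ_k. -/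
open scoped Pointwise

/-- A valuation on convex bodies: additive on unions and intersections, whenever the union
is again a convex body. -/
def IsValu {n : ℕ} {V : Type*} [AddCommMonoid V]
    (μ : ConvexBody (EuclideanSpace ℝ (Fin n)) → V) : Prop :=
  ∀ K L M N : ConvexBody (EuclideanSpace ℝ (Fin n)),
    (M : Set (EuclideanSpace ℝ (Fin n))) = ↑K ∪ ↑L →
    (N : Set (EuclideanSpace ℝ (Fin n))) = ↑K ∩ ↑L →
    μ M + μ N = μ K + μ L

/-!
The coefficients of a polynomial of degree `< N` are fixed linear combinations of its values
at `N` distinct points. Applied to `t ↦ μ (t • K)` at `t = 1, …, N`, this writes the would-be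
degree-`k` part of `μ` as a fixed linear combination of the dilates `K ↦ μ (j • K)`. Each
dilate is again a continuous valuation, hence so is every part; homogeneity follows by applying
the same interpolation to `t ↦ μ (t • s • K)`, and uniqueness because homogeneous parts also
make `t ↦ μ (t • K)` a polynomial with those coefficients.
-/

theorem Matrix.eq_sum_inv_vandermonde_smul {R V : Type*} [Field R] [AddCommMonoid V]
    [Module R V] {N : ℕ} {x : Fin N → R} (hx : Function.Injective x) {f c : Fin N → V}
    (h : ∀ j, f j = ∑ k : Fin N, x j ^ (k : ℕ) • c k) (k : Fin N) :
    c k = ∑ j, (vandermonde x)⁻¹ k j • f j := by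
  have hdet : IsUnit (vandermonde x).det := (det_vandermonde_ne_zero_iff.mpr hx).isUnit
  have hsum : ∑ j, (vandermonde x)⁻¹ k j • f j =
      ∑ m, ((vandermonde x)⁻¹ * vandermonde x) k m • c m := by
    simp only [h, Finset.smul_sum, mul_apply, vandermonde_apply, Finset.sum_smul, smul_smul]
    exact Finset.sum_comm
  rw [hsum, nonsing_inv_mul _ hdet]
  simp [one_apply, ite_smul]

namespace ConvexBody

variable {E : Type*} [SeminormedAddCommGroup E] [NormedSpace ℝ E]

theorem dist_smul_le (c : ℝ) (K L : ConvexBody E) :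
    dist (c • K) (c • L) ≤ ‖c‖ * dist K L := by
  have near (K L : ConvexBody E) : ∀ x ∈ (c • K : Set E), ∃ y ∈ (c • L : Set E),
      dist x y ≤ ‖c‖ * dist K L := by
    rintro _ ⟨a, ha, rfl⟩
    obtain ⟨b, hb, hab⟩ := L.isCompact.exists_infDist_eq_dist L.nonempty a
    refine ⟨c • b, Set.smul_mem_smul_set hb, ?_⟩
    rw [dist_smul₀, ← hab]
    exact mul_le_mul_of_nonneg_left
      (Metric.infDist_le_hausdorffDist_of_mem ha hausdorffEDist_ne_top) (norm_nonneg c)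
  rw [← hausdorffDist_coe, coe_smul, coe_smul]
  refine Metric.hausdorffDist_le_of_mem_dist (by positivity) (near K L) fun x hx => ?_
  simpa only [dist_comm K L] using near L K x hx

theorem lipschitzWith_smul (c : ℝ) : LipschitzWith ‖c‖₊ fun K : ConvexBody E => c • K :=
  LipschitzWith.of_dist_le_mul (dist_smul_le c)

instance : ContinuousConstSMul ℝ (ConvexBody E) :=
  ⟨fun c => (lipschitzWith_smul c).continuous⟩

end ConvexBody

section HomogeneousPart

variable {E V : Type*} [SeminormedAddCommGroup E] [NormedSpace ℝ E]
  [AddCommMonoid V] [Module ℝ V] {N : ℕ}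

def interpolationNode (j : Fin N) : ℝ := j + 1

theorem interpolationNode_pos (j : Fin N) : 0 < interpolationNode j := by
  unfold interpolationNode; positivity

theorem interpolationNode_injective : Function.Injective (interpolationNode (N := N)) :=
  fun i j h => Fin.ext (by simpa [interpolationNode] using h)

/-- Lagrange interpolation of `t ↦ μ (t • K)` at the nodes `t = 1, …, N`: the coefficient of
`t ^ k`. -/
noncomputable def homogeneousPart (N : ℕ) (μ : ConvexBody E → V) (k : Fin N)
    (K : ConvexBody E) : V :=
  ∑ j, (Matrix.vandermonde interpolationNode)⁻¹ k j • μ (interpolationNode j • K)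

def HasPolynomialScaling (N : ℕ) (μ : ConvexBody E → V) : Prop :=
  ∀ K : ConvexBody E, ∃ c : Fin N → V,
    ∀ t : ℝ, 0 ≤ t → μ (t • K) = ∑ k : Fin N, t ^ (k : ℕ) • c k

theorem homogeneousPart_eq_of_forall_node {μ : ConvexBody E → V} {K : ConvexBody E}
    {c : Fin N → V}
    (h : ∀ j : Fin N,
      μ (interpolationNode j • K) = ∑ k : Fin N, interpolationNode j ^ (k : ℕ) • c k)
    (k : Fin N) : homogeneousPart N μ k K = c k :=
  (Matrix.eq_sum_inv_vandermonde_smul interpolationNode_injective h k).symm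

namespace HasPolynomialScaling

variable {μ : ConvexBody E → V}

theorem apply_smul_eq_sum (hμ : HasPolynomialScaling N μ) (K : ConvexBody E) {t : ℝ}
    (ht : 0 ≤ t) :
    μ (t • K) = ∑ k : Fin N, t ^ (k : ℕ) • homogeneousPart N μ k K := by
  obtain ⟨c, hc⟩ := hμ K
  have hcoeff := homogeneousPart_eq_of_forall_node fun j => hc _ (interpolationNode_pos j).le
  simp only [hc t ht, hcoeff]

theorem apply_eq_sum (hμ : HasPolynomialScaling N μ) (K : ConvexBody E) :
    μ K = ∑ k, homogeneousPart N μ k K := by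
  simpa using hμ.apply_smul_eq_sum K zero_le_one

theorem homogeneousPart_smul (hμ : HasPolynomialScaling N μ) (k : Fin N) {t : ℝ} (ht : 0 ≤ t)
    (K : ConvexBody E) :
    homogeneousPart N μ k (t • K) = t ^ (k : ℕ) • homogeneousPart N μ k K := by
  refine homogeneousPart_eq_of_forall_node
    (c := fun m => t ^ (m : ℕ) • homogeneousPart N μ m K) (fun j => ?_) k
  rw [smul_smul, hμ.apply_smul_eq_sum K (mul_nonneg (interpolationNode_pos j).le ht)]
  simp only [mul_pow, mul_smul]

end HasPolynomialScaling

theorem eq_homogeneousPart_of_sum {μ : ConvexBody E → V} {μs : Fin N → ConvexBody E → V}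
    (hhom : ∀ k, ∀ t : ℝ, 0 < t → ∀ K, μs k (t • K) = t ^ (k : ℕ) • μs k K)
    (hsum : ∀ K, μ K = ∑ k, μs k K) : μs = homogeneousPart N μ := by
  funext k K
  refine (homogeneousPart_eq_of_forall_node (c := fun m => μs m K) (fun j => ?_) k).symm
  rw [hsum]
  exact Finset.sum_congr rfl fun m _ => hhom m _ (interpolationNode_pos j) K

theorem continuous_homogeneousPart [TopologicalSpace V] [ContinuousAdd V]
    [ContinuousConstSMul ℝ V] {μ : ConvexBody E → V} (hμ : Continuous μ) (k : Fin N) :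
    Continuous (homogeneousPart N μ k) :=
  continuous_finsetSum _ fun _ _ => ((hμ.comp (continuous_const_smul _)).const_smul _)

end HomogeneousPart

namespace IsValu

variable {n : ℕ} {V : Type*} [AddCommMonoid V]
  {μ : ConvexBody (EuclideanSpace ℝ (Fin n)) → V}

theorem comp_smul (hμ : IsValu μ) {c : ℝ} (hc : c ≠ 0) : IsValu fun K => μ (c • K) := by
  intro K L M N hM hN
  apply hμ
  · rw [ConvexBody.coe_smul, hM, Set.smul_set_union, ConvexBody.coe_smul, ConvexBody.coe_smul]
  · rw [ConvexBody.coe_smul, hN, Set.smul_set_inter₀ hc, ConvexBody.coe_smul,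
      ConvexBody.coe_smul]

theorem const_smul [Module ℝ V] (hμ : IsValu μ) (a : ℝ) : IsValu fun K => a • μ K := by
  intro K L M N hM hN
  simp only [← smul_add, hμ K L M N hM hN]

theorem sum {ι : Type*} {s : Finset ι}
    {μs : ι → ConvexBody (EuclideanSpace ℝ (Fin n)) → V} (h : ∀ i ∈ s, IsValu (μs i)) :
    IsValu fun K => ∑ i ∈ s, μs i K := by
  intro K L M N hM hN
  simp only [← Finset.sum_add_distrib]
  exact Finset.sum_congr rfl fun i hi => h i hi K L M N hM hN

theorem homogeneousPart [Module ℝ V] (hμ : IsValu μ) {N : ℕ} (k : Fin N) :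
    IsValu (homogeneousPart N μ k) :=
  sum fun j _ => (hμ.comp_smul (interpolationNode_pos j).ne').const_smul _

end IsValu

theorem homogeneous_decomposition_bodies_general (n d : ℕ)
    (V : Type*) [AddCommGroup V] [Module ℝ V] [TopologicalSpace V]
    [IsTopologicalAddGroup V] [ContinuousSMul ℝ V]
    (μ : ConvexBody (EuclideanSpace ℝ (Fin n)) → V)
    (hcont : Continuous μ) (hval : IsValu μ)
    (hpoly : ∀ K : ConvexBody (EuclideanSpace ℝ (Fin n)),
      ∃ c : Fin (n + d + 1) → V, ∀ t : ℝ, 0 ≤ t →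
        ∀ L : ConvexBody (EuclideanSpace ℝ (Fin n)),
          (L : Set (EuclideanSpace ℝ (Fin n))) = t • (K : Set (EuclideanSpace ℝ (Fin n))) →
          μ L = ∑ k : Fin (n + d + 1), t ^ (k : ℕ) • c k) :
    ∃! μs : Fin (n + d + 1) → (ConvexBody (EuclideanSpace ℝ (Fin n)) → V),
      (∀ k, Continuous (μs k) ∧ IsValu (μs k) ∧
        ∀ t : ℝ, 0 < t → ∀ K : ConvexBody (EuclideanSpace ℝ (Fin n)),
          μs k (t • K) = t ^ (k : ℕ) • μs k K) ∧
      ∀ K, μ K = ∑ k, μs k K := by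
  have hμ : HasPolynomialScaling (n + d + 1) μ := by
    intro K
    obtain ⟨c, hc⟩ := hpoly K
    exact ⟨c, fun t ht => hc t ht _ (ConvexBody.coe_smul t K)⟩
  refine ⟨homogeneousPart (n + d + 1) μ, ⟨fun k => ⟨continuous_homogeneousPart hcont k,
    hval.homogeneousPart k, fun t ht K => hμ.homogeneousPart_smul k ht.le K⟩,
    hμ.apply_eq_sum⟩, ?_⟩
  rintro μs ⟨hμs, hsum⟩
  exact eq_homogeneousPart_of_sum (fun k => (hμs k).2.2) hsum

/-- Homogeneous decomposition of polynomial valuations on convex bodies: if `t ↦ μ(tK)` is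
a polynomial of degree at most `n + d`, then `μ` decomposes uniquely into homogeneous
continuous valuations of degrees `0, …, n + d`. -/
theorem homogeneous_decomposition_bodies (n d : ℕ)
    (V : Type*) [AddCommGroup V] [Module ℝ V] [TopologicalSpace V]
    [IsTopologicalAddGroup V] [ContinuousSMul ℝ V] [T2Space V]
    (μ : ConvexBody (EuclideanSpace ℝ (Fin n)) → V)
    (hcont : Continuous μ) (hval : IsValu μ)
    (hpoly : ∀ K : ConvexBody (EuclideanSpace ℝ (Fin n)),
      ∃ c : Fin (n + d + 1) → V, ∀ t : ℝ, 0 ≤ t →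
        ∀ L : ConvexBody (EuclideanSpace ℝ (Fin n)),
          (L : Set (EuclideanSpace ℝ (Fin n))) = t • (K : Set (EuclideanSpace ℝ (Fin n))) →
          μ L = ∑ k : Fin (n + d + 1), t ^ (k : ℕ) • c k) :
    ∃! μs : Fin (n + d + 1) → (ConvexBody (EuclideanSpace ℝ (Fin n)) → V),
      (∀ k, Continuous (μs k) ∧ IsValu (μs k) ∧
        ∀ t : ℝ, 0 < t → ∀ K : ConvexBody (EuclideanSpace ℝ (Fin n)),
          μs k (t • K) = t ^ (k : ℕ) • μs k K) ∧
      ∀ K, μ K = ∑ k, μs k K :=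
  homogeneous_decomposition_bodies_general n d V μ hcont hval hpoly
end
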